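/- arXiv:2110.05901 — 2 statements merged into one kernel-verified Lean document; each statement's English description precedes it below -/
import Mathlib

section
/- Let w(a) = c > 3 for all a ∈ A and w(b) = 1 for all b ∈ B. Let M1, M2 be popular matchings, C a connected component of M1 △ M2, and y a nice witness of M1 or M2. Then on C, the witness y is either 'odd' (takes only values in {−c, 2−c, −1, 1, c−2, c}) or 'even' (takes only values in {1−c, 0, c−1}). -/
structure PMInstance (V : Type) [Fintype V] [DecidableEq V] where
  A : Finset V
  E : V → V → Prop
  Esymm : ∀ u v : V, E u v → E v u
  loopless : ∀ v : V, ¬ E v v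
  bipartite : ∀ u v : V, E u v → (u ∈ A ↔ v ∉ A)
  pref : V → V → V → Prop
  pref_irrefl : ∀ v u : V, ¬ pref v u u
  pref_trans : ∀ v u z t : V, pref v u z → pref v z t → pref v u t
  pref_asymm : ∀ v u z : V, pref v u z → ¬ pref v z u
  pref_total : ∀ v u z : V, E v u → E v z → u ≠ z → pref v u z ∨ pref v z u
  w : V → ℚ
  w_nonneg : ∀ v : V, 0 ≤ w v

structure Matching (V : Type) [Fintype V] [DecidableEq V] (E : V → V → Prop) where
  m : V → Option V
  msymm : ∀ u v : V, m u = some v ↔ m v = some u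
  valid : ∀ u v : V, m u = some v → E u v

attribute [local instance] Classical.propDecidable

variable {V : Type} [Fintype V] [DecidableEq V]

/-- Vertex `v` prefers matching `M` to matching `M'`. -/
def prefersVx (I : PMInstance V) (M M' : Matching V I.E) (v : V) : Prop :=
  (M'.m v = none ∧ M.m v ≠ none) ∨
    (∃ u u' : V, M.m v = some u ∧ M'.m v = some u' ∧ I.pref v u u')

/-- Total weight of the vertices preferring `M` to `M'`. -/
noncomputable def weightPref (I : PMInstance V) (M M' : Matching V I.E) : ℚ :=
  ∑ v : V, if prefersVx I M M' v then I.w v else 0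

/-- A matching is popular if it never loses a weighted head-to-head comparison. -/
def popular (I : PMInstance V) (M : Matching V I.E) : Prop :=
  ∀ M' : Matching V I.E, weightPref I M' M ≤ weightPref I M M'

/-- The vote of `u` for `v` against its partner in `M`. -/
noncomputable def vote (I : PMInstance V) (M : Matching V I.E) (u v : V) : ℚ :=
  if M.m u = some v then 0
  else if M.m u = none ∨ (∃ z : V, M.m u = some z ∧ I.pref u v z) then I.w u
  else - I.w u

/-- A witness of popularity of `M`. -/
def IsWitness (I : PMInstance V) (M : Matching V I.E) (y : V → ℚ) : Prop :=
  (∑ v : V, y v) = 0 ∧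
  (∀ u v : V, I.E u v → vote I M u v + vote I M v u ≤ y u + y v) ∧
  (∀ v : V, M.m v = none → 0 ≤ y v) ∧
  (∀ v : V, - I.w v ≤ y v)

/-- A nice witness: a witness with values from the six-element candidate sets. -/
def NiceWitness (I : PMInstance V) (M : Matching V I.E) (c : ℚ) (y : V → ℚ) : Prop :=
  IsWitness I M y ∧
    (∀ a ∈ I.A, y a ∈ ({-c, 1 - c, 2 - c, -1, 0, 1} : Set ℚ)) ∧
    (∀ b : V, b ∉ I.A → y b ∈ ({-1, 0, 1, c - 2, c - 1, c} : Set ℚ))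

/-- Edge relation of the symmetric difference of two matchings. -/
def symmDiffRel {E : V → V → Prop} (M₁ M₂ : Matching V E) (u v : V) : Prop :=
  (M₁.m u = some v ∧ M₂.m u ≠ some v) ∨ (M₂.m u = some v ∧ M₁.m u ≠ some v)

/-!
Let `y` be a witness of `M` and let `N` be the other popular matching. Complementary
slackness gives `y_a + y_b = 0` on the edges of `M`, so `∑_C y = 0` on the component `C`.
Exchanging `M` for `N` inside `C` yields a matching that cannot beat `N`, so the total vote
gain of `C` for `N` over `M` is nonnegative; against the edge constraints of `y` along `N`
this forces every `N`-edge of `C` to be tight. Hence every edge of `C` has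
`y_a + y_b ∈ {0, ±c ± 1}`, a sum of even parity, and the parity of `y` is constant on `C`.
-/

theorem Finset.sum_comp_of_involutive {α β : Type*} [AddCommMonoid β] {τ : α → α}
    (hτ : Function.Involutive τ) {S : Finset α} (hS : Set.MapsTo τ S S) (f : α → β) :
    ∑ v ∈ S, f (τ v) = ∑ v ∈ S, f v :=
  Finset.sum_nbij' τ τ hS hS (fun a _ => hτ a) (fun a _ => hτ a) (fun _ _ => rfl)

namespace Matching

variable {E : V → V → Prop}

def partnerOrSelf (X : Matching V E) (v : V) : V := (X.m v).getD v

theorem partnerOrSelf_of_some {X : Matching V E} {u v : V} (h : X.m u = some v) :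
    X.partnerOrSelf u = v := by
  simp [partnerOrSelf, h]

theorem partnerOrSelf_of_none {X : Matching V E} {v : V} (h : X.m v = none) :
    X.partnerOrSelf v = v := by
  simp [partnerOrSelf, h]

theorem partnerOrSelf_involutive (X : Matching V E) : Function.Involutive X.partnerOrSelf := by
  intro v
  rcases h : X.m v with _ | u
  · rw [partnerOrSelf_of_none h, partnerOrSelf_of_none h]
  · rw [partnerOrSelf_of_some h, partnerOrSelf_of_some ((X.msymm v u).mp h)]

theorem mem_of_mapsTo {X : Matching V E} {S : Finset V}
    (hS : Set.MapsTo X.partnerOrSelf S S) {u v : V} (h : X.m u = some v) (hu : u ∈ S) :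
    v ∈ S :=
  partnerOrSelf_of_some h ▸ hS hu

def piecewise (S : Finset V) (X Y : Matching V E) (hX : Set.MapsTo X.partnerOrSelf S S)
    (hY : Set.MapsTo Y.partnerOrSelf S S) : Matching V E where
  m := S.piecewise X.m Y.m
  msymm := by
    suffices h : ∀ u v, S.piecewise X.m Y.m u = some v → S.piecewise X.m Y.m v = some u from
      fun u v => ⟨h u v, h v u⟩
    intro u v huv
    by_cases hu : u ∈ S
    · rw [S.piecewise_eq_of_mem _ _ hu] at huv
      rw [S.piecewise_eq_of_mem _ _ (mem_of_mapsTo hX huv hu)]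
      exact (X.msymm u v).mp huv
    · rw [S.piecewise_eq_of_notMem _ _ hu] at huv
      have hv : v ∉ S := fun hv => hu (mem_of_mapsTo hY ((Y.msymm u v).mp huv) hv)
      rw [S.piecewise_eq_of_notMem _ _ hv]
      exact (Y.msymm u v).mp huv
  valid u v huv := by
    by_cases hu : u ∈ S
    · exact X.valid u v (by rwa [S.piecewise_eq_of_mem _ _ hu] at huv)
    · exact Y.valid u v (by rwa [S.piecewise_eq_of_notMem _ _ hu] at huv)

end Matching

namespace IsWitness

variable {I : PMInstance V} {M : Matching V I.E} {y : V → ℚ}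

theorem add_partnerOrSelf_nonneg (hy : IsWitness I M y) (v : V) :
    0 ≤ y v + y (M.partnerOrSelf v) := by
  rcases hv : M.m v with _ | u
  · rw [Matching.partnerOrSelf_of_none hv]
    linarith [hy.2.2.1 v hv]
  · have hvote := hy.2.1 v u (M.valid v u hv)
    simp only [vote, hv, (M.msymm v u).mp hv, if_true, add_zero] at hvote
    rwa [Matching.partnerOrSelf_of_some hv]

/-- Complementary slackness. -/
theorem add_partnerOrSelf_eq_zero (hy : IsWitness I M y) (v : V) :
    y v + y (M.partnerOrSelf v) = 0 := by
  have htotal : ∑ v, (y v + y (M.partnerOrSelf v)) = 0 := by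
    rw [Finset.sum_add_distrib,
      Finset.sum_comp_of_involutive M.partnerOrSelf_involutive (fun v _ => Finset.mem_univ _), hy.1,
      add_zero]
  exact (Finset.sum_eq_zero_iff_of_nonneg fun v _ => hy.add_partnerOrSelf_nonneg v).mp
    htotal v (Finset.mem_univ v)

theorem add_eq_zero_of_matched (hy : IsWitness I M y) {u v : V} (h : M.m u = some v) :
    y u + y v = 0 :=
  Matching.partnerOrSelf_of_some h ▸ hy.add_partnerOrSelf_eq_zero u

theorem sum_eq_zero_of_mapsTo (hy : IsWitness I M y) {S : Finset V}
    (hS : Set.MapsTo M.partnerOrSelf S S) : ∑ v ∈ S, y v = 0 := by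
  have h := Finset.sum_eq_zero (s := S) fun v _ => hy.add_partnerOrSelf_eq_zero v
  rw [Finset.sum_add_distrib, Finset.sum_comp_of_involutive M.partnerOrSelf_involutive hS] at h
  linarith

end IsWitness

/-- What vertex `v` gains, in weighted votes, by switching from `M` to `N`. -/
noncomputable def prefGain (I : PMInstance V) (M N : Matching V I.E) (v : V) : ℚ :=
  (if prefersVx I N M v then I.w v else 0) - (if prefersVx I M N v then I.w v else 0)

section PrefGain

variable {I : PMInstance V}

theorem weightPref_sub_weightPref (M N : Matching V I.E) :
    weightPref I N M - weightPref I M N = ∑ v, prefGain I M N v := by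
  simp only [weightPref, prefGain, Finset.sum_sub_distrib]

theorem prefGain_congr {M M' N N' : Matching V I.E} {v : V} (hM : M.m v = M'.m v)
    (hN : N.m v = N'.m v) : prefGain I M N v = prefGain I M' N' v := by
  unfold prefGain prefersVx
  rw [hM, hN]

theorem prefGain_self_of_eq {M N : Matching V I.E} {v : V} (h : M.m v = N.m v) :
    prefGain I M N v = 0 := by
  simp only [prefGain, prefersVx, h, sub_self]

theorem prefGain_swap (M N : Matching V I.E) (v : V) :
    prefGain I N M v = - prefGain I M N v := by
  simp only [prefGain, neg_sub]

theorem prefGain_of_some {M N : Matching V I.E} {u v : V} (h : N.m v = some u) :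
    prefGain I M N v = vote I M v u := by
  rcases hM : M.m v with _ | z
  · simp [prefGain, prefersVx, vote, h, hM]
  · simp only [prefGain, prefersVx, vote, h, hM, reduceCtorEq, Option.some.injEq,
      false_or, exists_and_left, exists_eq_left', ne_eq, not_false_eq_true, and_true]
    by_cases hzu : z = u
    · subst hzu
      simp [I.pref_irrefl]
    · rcases I.pref_total v u z (N.valid v u h) (M.valid v z hM) (Ne.symm hzu) with hp | hp
      · simp [hzu, hp, I.pref_asymm v u z hp]
      · simp [hzu, hp, I.pref_asymm v z u hp]

theorem prefGain_le_of_none {M N : Matching V I.E} {y : V → ℚ} (hy : IsWitness I M y)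
    {v : V} (h : N.m v = none) : prefGain I M N v ≤ y v := by
  rcases hM : M.m v with _ | z
  · simp [prefGain, prefersVx, h, hM, hy.2.2.1 v hM]
  · simpa [prefGain, prefersVx, h, hM] using hy.2.2.2 v

end PrefGain

section Popular

variable {I : PMInstance V} {M N : Matching V I.E} {S : Finset V}

/-- Switching from `N` to `M` on a union `S` of components of `M △ N` must not win against
the popular matching `N`. -/
theorem sum_prefGain_nonneg_of_popular (hN : popular I N) (hSM : Set.MapsTo M.partnerOrSelf S S)
    (hSN : Set.MapsTo N.partnerOrSelf S S) : 0 ≤ ∑ v ∈ S, prefGain I M N v := by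
  set N' := Matching.piecewise S M N hSM hSN
  have hgain : ∀ v, prefGain I N N' v = if v ∈ S then - prefGain I M N v else 0 := by
    intro v
    split_ifs with hv
    · rw [← prefGain_swap]
      exact prefGain_congr rfl (S.piecewise_eq_of_mem _ _ hv)
    · exact prefGain_self_of_eq (S.piecewise_eq_of_notMem _ _ hv).symm
  have hsum := weightPref_sub_weightPref N N'
  simp only [hgain, ← Finset.sum_filter, Finset.filter_mem_eq_inter, Finset.univ_inter,
    Finset.sum_neg_distrib] at hsum
  linarith [hN N']

/-- Summing the constraints of `y` over the `N`-edges inside `S` gives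
`2 ∑_S y = 0 ≤ 2 ∑_S prefGain`, so all of them are tight. -/
theorem IsWitness.add_eq_vote_add_vote {y : V → ℚ} (hy : IsWitness I M y) (hN : popular I N)
    (hSM : Set.MapsTo M.partnerOrSelf S S) (hSN : Set.MapsTo N.partnerOrSelf S S) {u v : V}
    (hu : u ∈ S) (huv : N.m u = some v) : y u + y v = vote I M u v + vote I M v u := by
  set g : V → ℚ := fun x => y x + y (N.partnerOrSelf x) -
    (prefGain I M N x + prefGain I M N (N.partnerOrSelf x))
  have hg_nonneg : ∀ x ∈ S, 0 ≤ g x := by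
    intro x _
    rcases hx : N.m x with _ | x'
    · simp only [g, Matching.partnerOrSelf_of_none hx]
      linarith [prefGain_le_of_none hy hx]
    · simp only [g, Matching.partnerOrSelf_of_some hx, prefGain_of_some hx,
        prefGain_of_some ((N.msymm x x').mp hx)]
      linarith [hy.2.1 x x' (N.valid x x' hx)]
  have hg_sum : ∑ x ∈ S, g x = 0 := by
    have h2 : ∑ x ∈ S, g x = 2 * (∑ x ∈ S, y x - ∑ x ∈ S, prefGain I M N x) := by
      simp only [g, Finset.sum_sub_distrib, Finset.sum_add_distrib,
        Finset.sum_comp_of_involutive N.partnerOrSelf_involutive hSN]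
      ring
    linarith [Finset.sum_nonneg hg_nonneg, hy.sum_eq_zero_of_mapsTo hSM,
      sum_prefGain_nonneg_of_popular hN hSM hSN]
  have hgu := (Finset.sum_eq_zero_iff_of_nonneg hg_nonneg).mp hg_sum u hu
  simp only [g, Matching.partnerOrSelf_of_some huv, prefGain_of_some huv,
    prefGain_of_some ((N.msymm u v).mp huv)] at hgu
  linarith

end Popular

section SymmDiff

variable {E : V → V → Prop} {M₁ M₂ : Matching V E}

theorem symmDiffRel_comm (M₁ M₂ : Matching V E) : symmDiffRel M₁ M₂ = symmDiffRel M₂ M₁ := by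
  funext u v
  exact propext or_comm

theorem symmDiffRel.symm {u v : V} (h : symmDiffRel M₁ M₂ u v) : symmDiffRel M₁ M₂ v u := by
  rcases h with ⟨h₁, h₂⟩ | ⟨h₁, h₂⟩
  · exact Or.inl ⟨(M₁.msymm u v).mp h₁, fun h => h₂ ((M₂.msymm v u).mp h)⟩
  · exact Or.inr ⟨(M₂.msymm u v).mp h₁, fun h => h₂ ((M₁.msymm v u).mp h)⟩

theorem symmDiffRel.rel {u v : V} (h : symmDiffRel M₁ M₂ u v) : E u v := by
  rcases h with ⟨h, _⟩ | ⟨h, _⟩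
  · exact M₁.valid u v h
  · exact M₂.valid u v h

theorem symmDiffRel_of_left {u v : V} (hu : ∃ z, symmDiffRel M₁ M₂ u z)
    (h : M₁.m u = some v) : symmDiffRel M₁ M₂ u v := by
  refine Or.inl ⟨h, fun h' => ?_⟩
  obtain ⟨z, ⟨h₁, h₂⟩ | ⟨h₁, h₂⟩⟩ := hu <;> simp_all

theorem exists_symmDiffRel_of_reflTransGen {v₀ v : V} (hv₀ : ∃ z, symmDiffRel M₁ M₂ v₀ z)
    (hv : Relation.ReflTransGen (symmDiffRel M₁ M₂) v₀ v) : ∃ z, symmDiffRel M₁ M₂ v z := by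
  induction hv with
  | refl => exact hv₀
  | tail _ h _ => exact ⟨_, h.symm⟩

noncomputable def symmDiffComponent (M₁ M₂ : Matching V E) (v₀ : V) : Finset V :=
  Finset.univ.filter (Relation.ReflTransGen (symmDiffRel M₁ M₂) v₀)

theorem mem_symmDiffComponent {v₀ v : V} :
    v ∈ symmDiffComponent M₁ M₂ v₀ ↔ Relation.ReflTransGen (symmDiffRel M₁ M₂) v₀ v := by
  simp [symmDiffComponent]

theorem mapsTo_partnerOrSelf_symmDiffComponent_left {v₀ : V}
    (hv₀ : ∃ z, symmDiffRel M₁ M₂ v₀ z) :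
    Set.MapsTo M₁.partnerOrSelf (symmDiffComponent M₁ M₂ v₀) (symmDiffComponent M₁ M₂ v₀) := by
  intro v hv
  rw [Finset.mem_coe, mem_symmDiffComponent] at hv ⊢
  rcases h : M₁.m v with _ | u
  · rwa [Matching.partnerOrSelf_of_none h]
  · rw [Matching.partnerOrSelf_of_some h]
    exact hv.tail (symmDiffRel_of_left (exists_symmDiffRel_of_reflTransGen hv₀ hv) h)

theorem mapsTo_partnerOrSelf_symmDiffComponent_right {v₀ : V}
    (hv₀ : ∃ z, symmDiffRel M₁ M₂ v₀ z) :
    Set.MapsTo M₂.partnerOrSelf (symmDiffComponent M₁ M₂ v₀) (symmDiffComponent M₁ M₂ v₀) := by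
  rw [symmDiffComponent, symmDiffRel_comm]
  exact mapsTo_partnerOrSelf_symmDiffComponent_left (symmDiffRel_comm M₁ M₂ ▸ hv₀)

end SymmDiff

/-- Writing a candidate value as `n + m c` with `m ∈ {-1, 0, 1}`, odd and even refer to the
parity of `n + m`; for `c > 3` this representation is unique. -/
def oddValues (c : ℚ) : Set ℚ := {-c, 2 - c, -1, 1, c - 2, c}

def evenValues (c : ℚ) : Set ℚ := {1 - c, 0, c - 1}

section Parity

variable {c : ℚ}

theorem disjoint_oddValues_evenValues (hc : 3 < c) : Disjoint (oddValues c) (evenValues c) := by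
  rw [Set.disjoint_left]
  intro x hodd heven
  simp only [oddValues, evenValues, Set.mem_insert_iff, Set.mem_singleton_iff] at hodd heven
  rcases hodd with rfl | rfl | rfl | rfl | rfl | rfl <;>
    rcases heven with h | h | h <;> linarith

/-- The edge sums `0` and `±c ± 1` are even. -/
theorem same_parity_of_add_mem {x z : ℚ} (hc : 3 < c)
    (hx : x ∈ ({-c, 1 - c, 2 - c, -1, 0, 1} : Set ℚ))
    (hz : z ∈ ({-1, 0, 1, c - 2, c - 1, c} : Set ℚ))
    (hs : x + z ∈ ({0, c + 1, c - 1, 1 - c, -c - 1} : Set ℚ)) :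
    (x ∈ oddValues c ∧ z ∈ oddValues c) ∨ (x ∈ evenValues c ∧ z ∈ evenValues c) := by
  simp only [oddValues, evenValues, Set.mem_insert_iff, Set.mem_singleton_iff] at hx hz hs ⊢
  rcases hx with rfl | rfl | rfl | rfl | rfl | rfl <;>
    rcases hz with rfl | rfl | rfl | rfl | rfl | rfl <;>
    rcases hs with h | h | h | h | h <;>
    first
      | (exfalso; linarith)
      | (left; constructor <;> norm_num; done)
      | (right; constructor <;> norm_num)

theorem mem_oddValues_iff_of_add_mem {x z : ℚ} (hc : 3 < c)
    (hx : x ∈ ({-c, 1 - c, 2 - c, -1, 0, 1} : Set ℚ))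
    (hz : z ∈ ({-1, 0, 1, c - 2, c - 1, c} : Set ℚ))
    (hs : x + z ∈ ({0, c + 1, c - 1, 1 - c, -c - 1} : Set ℚ)) :
    x ∈ oddValues c ↔ z ∈ oddValues c := by
  rcases same_parity_of_add_mem hc hx hz hs with ⟨hx', hz'⟩ | ⟨hx', hz'⟩
  · exact iff_of_true hx' hz'
  · have hdisj := Set.disjoint_right.mp (disjoint_oddValues_evenValues hc)
    exact iff_of_false (hdisj hx') (hdisj hz')

end Parity

theorem vote_eq_or_eq_neg {I : PMInstance V} {M : Matching V I.E} {u v : V}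
    (h : M.m u ≠ some v) : vote I M u v = I.w u ∨ vote I M u v = -I.w u := by
  unfold vote
  rw [if_neg h]
  split_ifs <;> simp

section NiceWitness

variable {I : PMInstance V} {c : ℚ} {M N : Matching V I.E} {y : V → ℚ}

theorem NiceWitness.mem_oddValues_or_mem_evenValues (hy : NiceWitness I M c y) (v : V) :
    y v ∈ oddValues c ∨ y v ∈ evenValues c := by
  have h : y v ∈ ({-c, 1 - c, 2 - c, -1, 0, 1} : Set ℚ) ∨
      y v ∈ ({-1, 0, 1, c - 2, c - 1, c} : Set ℚ) := by
    by_cases hv : v ∈ I.A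
    · exact Or.inl (hy.2.1 v hv)
    · exact Or.inr (hy.2.2 v hv)
  simp only [oddValues, evenValues, Set.mem_insert_iff, Set.mem_singleton_iff] at h ⊢
  rcases h with (h | h | h | h | h | h) | (h | h | h | h | h | h) <;> simp [h]

theorem IsWitness.add_mem_of_symmDiffRel (hA : ∀ a ∈ I.A, I.w a = c)
    (hB : ∀ b : V, b ∉ I.A → I.w b = 1) (hy : IsWitness I M y) (hN : popular I N)
    {S : Finset V} (hSM : Set.MapsTo M.partnerOrSelf S S) (hSN : Set.MapsTo N.partnerOrSelf S S)
    {a b : V} (ha : a ∈ S) (haA : a ∈ I.A) (hab : symmDiffRel M N a b) :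
    y a + y b ∈ ({0, c + 1, c - 1, 1 - c, -c - 1} : Set ℚ) := by
  rcases hab with ⟨hMab, _⟩ | ⟨hNab, hMab⟩
  · rw [hy.add_eq_zero_of_matched hMab]
    exact Set.mem_insert _ _
  · have hbA : b ∉ I.A := (I.bipartite a b (N.valid a b hNab)).mp haA
    rw [hy.add_eq_vote_add_vote hN hSM hSN ha hNab]
    rcases vote_eq_or_eq_neg hMab with h₁ | h₁ <;>
      rcases vote_eq_or_eq_neg (fun h => hMab ((M.msymm b a).mp h)) with h₂ | h₂ <;>
      simp only [h₁, h₂, hA a haA, hB b hbA, Set.mem_insert_iff, Set.mem_singleton_iff] <;>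
      ring_nf <;> simp

theorem NiceWitness.mem_oddValues_iff_of_reflTransGen (hc : 3 < c)
    (hA : ∀ a ∈ I.A, I.w a = c) (hB : ∀ b : V, b ∉ I.A → I.w b = 1)
    (hy : NiceWitness I M c y) (hN : popular I N) {v₀ v : V}
    (hv₀ : ∃ z, symmDiffRel M N v₀ z) (hv : Relation.ReflTransGen (symmDiffRel M N) v₀ v) :
    y v ∈ oddValues c ↔ y v₀ ∈ oddValues c := by
  have hedge : ∀ a b, Relation.ReflTransGen (symmDiffRel M N) v₀ a → a ∈ I.A →
      symmDiffRel M N a b → (y a ∈ oddValues c ↔ y b ∈ oddValues c) := by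
    intro a b ha haA hab
    have hbA : b ∉ I.A := (I.bipartite a b hab.rel).mp haA
    exact mem_oddValues_iff_of_add_mem hc (hy.2.1 a haA) (hy.2.2 b hbA)
      (hy.1.add_mem_of_symmDiffRel hA hB hN (mapsTo_partnerOrSelf_symmDiffComponent_left hv₀)
        (mapsTo_partnerOrSelf_symmDiffComponent_right hv₀) (mem_symmDiffComponent.mpr ha)
        haA hab)
  induction hv with
  | refl => rfl
  | @tail u w hu huw ih =>
    refine Iff.trans ?_ ih
    by_cases huA : u ∈ I.A
    · exact (hedge u w hu huA huw).symm
    · have hwA : w ∈ I.A := by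
        by_contra hwA
        exact huA ((I.bipartite u w huw.rel).mpr hwA)
      exact hedge w u (hu.tail huw) hwA huw.symm

end NiceWitness

/-- On each connected component of the symmetric difference of two popular
matchings, a nice witness of either matching is entirely odd or entirely even. -/
theorem nice_witness_even_or_odd (I : PMInstance V) (c : ℚ) (hc : 3 < c)
    (hA : ∀ a ∈ I.A, I.w a = c) (hB : ∀ b : V, b ∉ I.A → I.w b = 1)
    (M₁ M₂ : Matching V I.E) (h₁ : popular I M₁) (h₂ : popular I M₂)
    (M : Matching V I.E) (hM : M = M₁ ∨ M = M₂)
    (y : V → ℚ) (hy : NiceWitness I M c y)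
    (v₀ : V) (hv₀ : ∃ z, symmDiffRel M₁ M₂ v₀ z) :
    (∀ v : V, Relation.ReflTransGen (symmDiffRel M₁ M₂) v₀ v →
        y v ∈ ({-c, 2 - c, -1, 1, c - 2, c} : Set ℚ)) ∨
      (∀ v : V, Relation.ReflTransGen (symmDiffRel M₁ M₂) v₀ v →
        y v ∈ ({1 - c, 0, c - 1} : Set ℚ)) := by
  wlog hM₁ : M = M₁ generalizing M₁ M₂
  · rw [symmDiffRel_comm] at hv₀ ⊢
    exact this M₂ M₁ h₂ h₁ hM.symm hv₀ (hM.resolve_left hM₁)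
  subst hM₁
  have hparity : ∀ v, Relation.ReflTransGen (symmDiffRel M M₂) v₀ v →
      (y v ∈ oddValues c ↔ y v₀ ∈ oddValues c) :=
    fun v hv => hy.mem_oddValues_iff_of_reflTransGen hc hA hB h₂ hv₀ hv
  by_cases h₀ : y v₀ ∈ oddValues c
  · exact Or.inl fun v hv => (hparity v hv).mpr h₀
  · exact Or.inr fun v hv => (hy.mem_oddValues_or_mem_evenValues v).resolve_left
      fun h => h₀ ((hparity v hv).mp h)
end

section
/- Let w(a) = c > 3 for all a ∈ A and w(b) = 1 for all b ∈ B, and let H be the graph containing for each a ∈ A the edges {a, f(a)} and {a, s(a)} (where f(a) is a's first-choice neighbor and s(a) is a's best-ranked neighbor among vertices of B that are not the first choice of any vertex in A). Then for every cycle C of H, every popular matching matches all vertices of C along edges of C. -/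
attribute [local instance] Classical.propDecidable

variable {V : Type} [Fintype V] [DecidableEq V]

/-- `b` is the first choice (`f`-post) of `a`. -/
def firstChoice (I : PMInstance V) (a b : V) : Prop :=
  I.E a b ∧ ∀ z : V, I.E a z → z ≠ b → I.pref a b z

/-- `b` is the `s`-post of `a`: best-ranked neighbor among vertices that are
no vertex's first choice. -/
def sPost (I : PMInstance V) (a b : V) : Prop :=
  I.E a b ∧ (¬ ∃ a' : V, firstChoice I a' b) ∧
    ∀ z : V, I.E a z → z ≠ b → (¬ ∃ a' : V, firstChoice I a' z) → I.pref a b z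

/-- The symmetrized relation of `f`- and `s`-edges. -/
def fsRel (I : PMInstance V) (u v : V) : Prop :=
  (u ∈ I.A ∧ (firstChoice I u v ∨ sPost I u v)) ∨
    (v ∈ I.A ∧ (firstChoice I v u ∨ sPost I v u))

/-- The graph with the edges `{a, f(a)}` and `{a, s(a)}` for all `a ∈ A`. -/
def fsGraph (I : PMInstance V) : SimpleGraph V where
  Adj u v := u ≠ v ∧ fsRel I u v
  symm := by
    constructor
    intro u v h
    exact ⟨h.1.symm, h.2.symm⟩
  loopless := ⟨fun v h => h.1 rfl⟩

/-!
Promoting one vertex of `A` to a free post it prefers, or two vertices of `A` along a path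
`a₁ → t₁ = M(a₂)`, `a₂ → t₂`, makes the promoted vertices better off (weight `c` each) while
the losers are at most the old partners and the posts involved: weight at most `1` in the first
case and at most `3 + c < 2c` in the second. Hence a popular matching matches every `a ∈ A`
to `f(a)` or `s(a)`. On a cycle of `H` the two cycle edges at `a ∈ A` are exactly its `f`- and
`s`-edge, so every `A`-vertex of the cycle is matched along it; as the cycle alternates between
`A` and `B`, this injection of its `A`-vertices into its `B`-vertices is onto.
-/

theorem Finset.sum_union_le_of_nonneg {ι M : Type*} [DecidableEq ι] [AddCommMonoid M]
    [PartialOrder M] [IsOrderedAddMonoid M] {f : ι → M} (hf : ∀ i, 0 ≤ f i) (s t : Finset ι) :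
    ∑ i ∈ s ∪ t, f i ≤ ∑ i ∈ s, f i + ∑ i ∈ t, f i := by
  rw [← Finset.sum_union_inter]
  exact le_add_of_nonneg_right (Finset.sum_nonneg fun i _ => hf i)

theorem Option.sum_toFinset_le {ι M : Type*} [AddCommMonoid M] [LE M] {f : ι → M}
    {o : Option ι} {r : M} (hr : 0 ≤ r) (h : ∀ i, o = some i → f i ≤ r) :
    ∑ i ∈ o.toFinset, f i ≤ r := by
  cases o <;> simp_all

namespace SimpleGraph.Walk

variable {α : Type*} {G : SimpleGraph α}

theorem countP_support_sub (P : α → Prop) [DecidablePred P]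
    (hP : ∀ u v, G.Adj u v → (P u ↔ ¬ P v)) {u v : α} (q : G.Walk u v) :
    (q.support.countP (P ·) : ℤ) - q.support.countP (¬ P ·)
      = (if P v then 1 else 0) - (if P u then 0 else 1) := by
  induction q with
  | @nil x => by_cases h : P x <;> simp [h]
  | @cons x y z h q ih =>
    have hPxy := hP _ _ h
    simp only [support_cons, List.countP_cons]
    grind

open Finset in
theorem IsCycle.card_filter_support_eq [DecidableEq α] (P : α → Prop) [DecidablePred P]
    (hP : ∀ u v, G.Adj u v → (P u ↔ ¬ P v)) {u : α} {p : G.Walk u u} (hp : p.IsCycle) :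
    #(p.support.toFinset.filter P) = #(p.support.toFinset.filter (¬ P ·)) := by
  cases p with
  | nil => exact absurd hp not_isCycle_nil
  | @cons _ y _ h q =>
    have hnodup : q.support.Nodup := by simpa using hp.support_nodup
    have hsupp : (cons h q).support.toFinset = q.support.toFinset := by
      simp [q.end_mem_support]
    have hcount := q.countP_support_sub P hP
    have hPuy := hP _ _ h
    rw [hsupp, hnodup.card_eq_countP, hnodup.card_eq_countP]
    grind

theorem IsCycle.exists_ne_mem_edges {u v : α} {p : G.Walk u u} (hp : p.IsCycle)
    (hv : v ∈ p.support) : ∃ x y, x ≠ y ∧ s(v, x) ∈ p.edges ∧ s(v, y) ∈ p.edges := by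
  obtain ⟨x, y, hxy, hset⟩ := Set.ncard_eq_two.mp (hp.ncard_neighborSet_toSubgraph_eq_two hv)
  have hx : x ∈ p.toSubgraph.neighborSet v := hset ▸ Set.mem_insert x {y}
  have hy : y ∈ p.toSubgraph.neighborSet v := hset ▸ Set.mem_insert_of_mem x rfl
  exact ⟨x, y, hxy, adj_toSubgraph_iff_mem_edges.mp hx, adj_toSubgraph_iff_mem_edges.mp hy⟩

end SimpleGraph.Walk

namespace PMInstance

variable (I : PMInstance V)

theorem exists_firstChoice {a z : V} (h : I.E a z) : ∃ b, firstChoice I a b := by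
  have : IsTrans V (I.pref a) := ⟨I.pref_trans a⟩
  have : Std.Irrefl (I.pref a) := ⟨I.pref_irrefl a⟩
  obtain ⟨b, hb, hmax⟩ :=
    (Finite.wellFounded_of_trans_of_irrefl (I.pref a)).has_min {x | I.E a x} ⟨z, h⟩
  exact ⟨b, hb, fun x hx hxb => (I.pref_total a b x hb hx hxb.symm).resolve_right (hmax x hx)⟩

variable {I}

theorem firstChoice_unique {a b b' : V} (h : firstChoice I a b) (h' : firstChoice I a b') :
    b = b' := by
  by_contra hne
  exact I.pref_asymm _ _ _ (h.2 b' h'.1 (Ne.symm hne)) (h'.2 b h.1 hne)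

theorem sPost_unique {a b b' : V} (h : sPost I a b) (h' : sPost I a b') : b = b' := by
  by_contra hne
  exact I.pref_asymm _ _ _ (h.2.2 b' h'.1 (Ne.symm hne) h'.2.1) (h'.2.2 b h.1 hne h.2.1)

end PMInstance

namespace Matching

variable {E : V → V → Prop} (M : Matching V E)

theorem eq_of_eq_some {u v v' : V} (h : M.m u = some v) (h' : M.m v' = some v) : u = v' := by
  rw [M.msymm] at h h'
  simpa [h] using h'

open Finset in
theorem exists_eq_some_of_card_le {s t : Finset V} (h : ∀ a ∈ s, ∃ b ∈ t, M.m a = some b)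
    (hcard : #t ≤ #s) : ∀ b ∈ t, ∃ a ∈ s, M.m a = some b := by
  choose f hft hf using h
  intro b hb
  obtain ⟨a, ha, rfl⟩ := surj_on_of_inj_on_of_card_le f hft
    (fun a₁ a₂ ha₁ ha₂ heq => M.eq_of_eq_some (hf a₁ ha₁) (heq ▸ hf a₂ ha₂)) hcard b hb
  exact ⟨a, ha, hf a ha⟩

theorem matched_along_cycle_of_matched_on_side {G : SimpleGraph V} (P : V → Prop)
    [DecidablePred P] (hP : ∀ u v, G.Adj u v → (P u ↔ ¬ P v)) {u₀ : V} {p : G.Walk u₀ u₀}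
    (hp : p.IsCycle) (hPM : ∀ a ∈ p.support, P a → ∃ z, M.m a = some z ∧ s(a, z) ∈ p.edges) :
    ∀ v ∈ p.support, ∃ z ∈ p.support, M.m v = some z ∧ s(v, z) ∈ p.edges := by
  intro v hv
  by_cases hvP : P v
  · obtain ⟨z, hz, he⟩ := hPM v hv hvP
    exact ⟨z, p.snd_mem_support_of_mem_edges he, hz, he⟩
  -- `M` maps the `P`-vertices of the cycle injectively into its equally many other vertices,
  -- hence onto them
  have hside : ∀ a ∈ p.support.toFinset.filter P,
      ∃ b ∈ p.support.toFinset.filter (¬ P ·), M.m a = some b := by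
    intro a ha
    obtain ⟨haS, haP⟩ := Finset.mem_filter.mp ha
    obtain ⟨z, hz, he⟩ := hPM a (List.mem_toFinset.mp haS) haP
    refine ⟨z, Finset.mem_filter.mpr ⟨?_, (hP a z (p.adj_of_mem_edges he)).mp haP⟩, hz⟩
    exact List.mem_toFinset.mpr (p.snd_mem_support_of_mem_edges he)
  obtain ⟨a, ha, hav⟩ := M.exists_eq_some_of_card_le hside
    (hp.card_filter_support_eq P hP).ge v (by simp [hv, hvP])
  obtain ⟨haS, haP⟩ := Finset.mem_filter.mp ha
  obtain ⟨z, hz, he⟩ := hPM a (List.mem_toFinset.mp haS) haP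
  obtain rfl : z = v := Option.some_injective _ (hz.symm.trans hav)
  exact ⟨a, List.mem_toFinset.mp haS, (M.msymm a z).mp hav, Sym2.eq_swap ▸ he⟩

def promote (a t : V) (hEsymm : ∀ u v, E u v → E v u)
    (hE : E a t) : Matching V E where
  m v := if v = a then some t else if v = t then some a
    else if M.m v = some a ∨ M.m v = some t then none else M.m v
  msymm u v := by
    have := M.msymm
    grind
  valid u v h := by
    have := M.valid u v
    grind

section Promote

variable {a t : V} {hEsymm : ∀ u v, E u v → E v u} {hE : E a t}

theorem promote_apply_left : (M.promote a t hEsymm hE).m a = some t := by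
  simp [promote]

theorem promote_apply_of_ne {v : V} (hva : v ≠ a) (hvt : v ≠ t) (hMa : M.m v ≠ some a)
    (hMt : M.m v ≠ some t) : (M.promote a t hEsymm hE).m v = M.m v := by
  simp [promote, hva, hvt, hMa, hMt]

end Promote

end Matching

section Preference

variable {I : PMInstance V} {M M' : Matching V I.E} {v : V}

theorem prefersVx_of_pref {t : V} (h : M.m v = some t) (ht : ∀ u, M'.m v = some u → I.pref v t u) :
    prefersVx I M M' v := by
  cases hv : M'.m v with
  | none => exact Or.inl ⟨hv, by simp [h]⟩
  | some u => exact Or.inr ⟨t, u, h, hv, ht u hv⟩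

theorem prefersVx.not_symm (h : prefersVx I M M' v) : ¬ prefersVx I M' M v := by
  rintro (⟨h₁, h₂⟩ | ⟨u, u', hu, hu', hpref⟩) <;> rcases h with ⟨h₃, h₄⟩ | ⟨z, z', hz, hz', hpref'⟩
  all_goals simp_all
  exact I.pref_asymm _ _ _ hpref hpref'

theorem not_prefersVx_of_eq (h : M.m v = M'.m v) : ¬ prefersVx I M M' v := by
  rintro (⟨h₁, h₂⟩ | ⟨u, u', hu, hu', hpref⟩)
  · exact h₂ (h ▸ h₁)
  · rw [← h, hu, Option.some.injEq] at hu'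
    exact I.pref_irrefl v u (hu' ▸ hpref)

theorem not_prefersVx_of_eq_none (h : M.m v = none) : ¬ prefersVx I M M' v := by
  rintro (⟨_, h₂⟩ | ⟨u, _, hu, _⟩) <;> simp_all

theorem weightPref_le_sum {S : Finset V} (hS : ∀ v, prefersVx I M M' v → v ∈ S) :
    weightPref I M M' ≤ ∑ v ∈ S, I.w v := by
  rw [weightPref, ← Finset.sum_filter]
  exact Finset.sum_le_sum_of_subset_of_nonneg (fun v hv => hS v (Finset.mem_filter.mp hv).2)
    (fun v _ _ => I.w_nonneg v)

theorem sum_le_weightPref {S : Finset V} (hS : ∀ v ∈ S, prefersVx I M M' v) :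
    ∑ v ∈ S, I.w v ≤ weightPref I M M' := by
  rw [weightPref, ← Finset.sum_filter]
  exact Finset.sum_le_sum_of_subset_of_nonneg (fun v hv => Finset.mem_filter.mpr ⟨by simp, hS v hv⟩)
    (fun v _ _ => I.w_nonneg v)

end Preference

section Promotion

variable {I : PMInstance V} {c : ℚ}

theorem not_popular_of_promote_unmatched (hc : 1 < c) (hA : ∀ a ∈ I.A, I.w a = c)
    (hB : ∀ b : V, b ∉ I.A → I.w b = 1) (M : Matching V I.E) {a t : V}
    (ha : a ∈ I.A) (hE : I.E a t) (ht : M.m t = none)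
    (hpref : ∀ u, M.m a = some u → I.pref a t u) : ¬ popular I M := by
  intro hpop
  set M' := M.promote a t I.Esymm hE
  have hwin : prefersVx I M' M a := prefersVx_of_pref (M.promote_apply_left) hpref
  have hlose : ∀ v, prefersVx I M M' v → v ∈ (M.m a).toFinset := by
    intro v hv
    by_contra hMva
    rw [Option.mem_toFinset, Option.mem_def, M.msymm] at hMva
    obtain rfl | hva := eq_or_ne v a
    · exact hwin.not_symm hv
    obtain rfl | hvt := eq_or_ne v t
    · exact not_prefersVx_of_eq_none ht hv
    refine not_prefersVx_of_eq (M.promote_apply_of_ne hva hvt hMva fun h => ?_).symm hv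
    simp [M.msymm v t |>.mp h] at ht
  have hgain : c ≤ weightPref I M' M := by
    rw [← hA a ha]
    simpa using sum_le_weightPref (S := {a}) (by simpa using hwin)
  have hloss : weightPref I M M' ≤ 1 :=
    (weightPref_le_sum hlose).trans <| Option.sum_toFinset_le zero_le_one fun b hb =>
      (hB b ((I.bipartite a b (M.valid a b hb)).mp ha)).le
  linarith [hpop M']

theorem not_popular_of_promote_twice (hc : 3 < c) (hA : ∀ a ∈ I.A, I.w a = c)
    (hB : ∀ b : V, b ∉ I.A → I.w b = 1) (M : Matching V I.E) {a₁ t₁ a₂ t₂ : V}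
    (ha₁ : a₁ ∈ I.A) (ha₂ : a₂ ∈ I.A) (hE₁ : I.E a₁ t₁) (hE₂ : I.E a₂ t₂)
    (hMt₁ : M.m t₁ = some a₂) (hpref₁ : ∀ u, M.m a₁ = some u → I.pref a₁ t₁ u)
    (hpref₂ : I.pref a₂ t₂ t₁) : ¬ popular I M := by
  intro hpop
  have ht₁ : t₁ ∉ I.A := (I.bipartite a₁ t₁ hE₁).mp ha₁
  have ht₂ : t₂ ∉ I.A := (I.bipartite a₂ t₂ hE₂).mp ha₂
  have hMa₂ : M.m a₂ = some t₁ := (M.msymm t₁ a₂).mp hMt₁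
  have ha₁a₂ : a₁ ≠ a₂ := by
    rintro rfl
    exact I.pref_irrefl a₁ t₁ (hpref₁ t₁ hMa₂)
  have ht₁t₂ : t₁ ≠ t₂ := by
    rintro rfl
    exact I.pref_irrefl a₂ t₁ hpref₂
  set M₁ := M.promote a₁ t₁ I.Esymm hE₁
  set M' := M₁.promote a₂ t₂ I.Esymm hE₂
  have hM₁a₁ : M₁.m a₁ = some t₁ := M.promote_apply_left
  have hM'a₁ : M'.m a₁ = some t₁ := by
    rw [M₁.promote_apply_of_ne ha₁a₂ (by rintro rfl; exact ht₂ ha₁), hM₁a₁]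
    · simpa [hM₁a₁] using fun h : t₁ = a₂ => ht₁ (h ▸ ha₂)
    · simpa [hM₁a₁] using ht₁t₂
  have hwin₁ : prefersVx I M' M a₁ := prefersVx_of_pref hM'a₁ hpref₁
  have hwin₂ : prefersVx I M' M a₂ :=
    prefersVx_of_pref M₁.promote_apply_left fun u hu => by
      rw [hMa₂, Option.some.injEq] at hu
      exact hu ▸ hpref₂
  have hlose : ∀ v, prefersVx I M M' v →
      v ∈ ({t₁, t₂} ∪ (M.m a₁).toFinset ∪ (M.m t₂).toFinset : Finset V) := by
    intro v hv
    by_contra hvS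
    simp only [Finset.mem_union, Finset.mem_insert, Finset.mem_singleton, Option.mem_toFinset,
      Option.mem_def, not_or] at hvS
    obtain ⟨⟨⟨hvt₁, hvt₂⟩, hva₁⟩, hvt₂'⟩ := hvS
    have hva₁' : v ≠ a₁ := by rintro rfl; exact hwin₁.not_symm hv
    have hva₂' : v ≠ a₂ := by rintro rfl; exact hwin₂.not_symm hv
    have hM₁v : M₁.m v = M.m v := M.promote_apply_of_ne hva₁' hvt₁
      (fun h => hva₁ ((M.msymm v a₁).mp h))
      (fun h => hva₂' (Option.some_injective _ (((M.msymm v t₁).mp h).symm.trans hMt₁)))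
    have hM'v : M'.m v = M.m v := by
      rw [M₁.promote_apply_of_ne hva₂' hvt₂ (fun h => ?_) (fun h => ?_), hM₁v]
      · exact hvt₁ (Option.some_injective _ (((M.msymm v a₂).mp (hM₁v ▸ h)).symm.trans hMa₂))
      · exact hvt₂' ((M.msymm v t₂).mp (hM₁v ▸ h))
    exact not_prefersVx_of_eq hM'v.symm hv
  -- a gain of `2c` against a loss of at most `3 + c`: this is where `c > 3` is needed
  have hgain : c + c ≤ weightPref I M' M := by
    have := sum_le_weightPref (M := M') (M' := M) (S := {a₁, a₂}) (by simp [hwin₁, hwin₂])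
    rwa [Finset.sum_pair ha₁a₂, hA a₁ ha₁, hA a₂ ha₂] at this
  have hw : ∀ v, I.w v ≤ c := fun v => by
    by_cases hv : v ∈ I.A
    · exact (hA v hv).le
    · linarith [hB v hv]
  have hloss : weightPref I M M' ≤ 2 + 1 + c := by
    refine (weightPref_le_sum hlose).trans ?_
    refine (Finset.sum_union_le_of_nonneg I.w_nonneg _ _).trans (add_le_add ?_ ?_)
    · refine (Finset.sum_union_le_of_nonneg I.w_nonneg _ _).trans (add_le_add ?_ ?_)
      · rw [Finset.sum_pair ht₁t₂, hB t₁ ht₁, hB t₂ ht₂]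
        norm_num
      · exact Option.sum_toFinset_le zero_le_one fun b hb =>
          (hB b ((I.bipartite a₁ b (M.valid a₁ b hb)).mp ha₁)).le
    · exact Option.sum_toFinset_le (by linarith) fun b _ => hw b
  linarith [hpop M']

end Promotion

theorem popular_matches_firstChoice_or_sPost {I : PMInstance V} {c : ℚ} (hc : 3 < c)
    (hA : ∀ a ∈ I.A, I.w a = c) (hB : ∀ b : V, b ∉ I.A → I.w b = 1) {M : Matching V I.E}
    (hM : popular I M) {a bf bs : V} (ha : a ∈ I.A) (hf : firstChoice I a bf)
    (hs : sPost I a bs) : M.m a = some bf ∨ M.m a = some bs := by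
  by_contra! hne
  by_cases hbetter : ∀ u, M.m a = some u → I.pref a bs u
  · cases hMbs : M.m bs with
    | none => exact not_popular_of_promote_unmatched (by linarith) hA hB M ha hs.1 hMbs hbetter hM
    | some a₂ =>
      -- `a₂` holds `bs`, which is nobody's first choice, so `a₂` prefers its own first choice
      have hE : I.E a₂ bs := I.Esymm _ _ (M.valid bs a₂ hMbs)
      have ha₂ : a₂ ∈ I.A := by
        by_contra h
        exact (I.bipartite a bs hs.1).mp ha ((I.bipartite bs a₂ (M.valid bs a₂ hMbs)).mpr h)
      obtain ⟨b₂, hb₂⟩ := I.exists_firstChoice hE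
      have hb₂bs : bs ≠ b₂ := fun h => hs.2.1 ⟨a₂, h ▸ hb₂⟩
      exact not_popular_of_promote_twice hc hA hB M ha ha₂ hs.1 hb₂.1 hMbs hbetter
        (hb₂.2 bs hE hb₂bs) hM
  · obtain ⟨z, hMa, hzbs⟩ : ∃ z, M.m a = some z ∧ ¬ I.pref a bs z := by simpa using hbetter
    have hEz : I.E a z := M.valid a z hMa
    have hzbf : z ≠ bf := fun h => hne.1 (h ▸ hMa)
    -- `a` holds a vertex it ranks above its `s`-post, so that vertex is someone's first choice
    obtain ⟨x, hx⟩ : ∃ x, firstChoice I x z := by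
      by_contra hz
      have hzbs' : z ≠ bs := fun h => hne.2 (h ▸ hMa)
      exact hzbs (hs.2.2 z hEz hzbs' hz)
    have hxa : x ≠ a := fun h => hzbf (I.firstChoice_unique (h ▸ hx) hf)
    have hxA : x ∈ I.A := (I.bipartite x z hx.1).mpr ((I.bipartite a z hEz).mp ha)
    have hMz : M.m z = some a := (M.msymm a z).mp hMa
    refine not_popular_of_promote_twice hc hA hB M hxA ha hx.1 hf.1 hMz (fun u hu => ?_)
      (hf.2 z hEz hzbf) hM
    exact hx.2 u (M.valid x u hu) fun h => hxa (M.eq_of_eq_some (h ▸ hu) hMa)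

section fsGraph

variable {I : PMInstance V}

theorem fsGraph_adj_mem_A_iff {u v : V} (h : (fsGraph I).Adj u v) : u ∈ I.A ↔ v ∉ I.A := by
  rcases h.2 with ⟨-, hf | hs⟩ | ⟨-, hf | hs⟩
  · exact I.bipartite u v hf.1
  · exact I.bipartite u v hs.1
  · exact I.bipartite u v (I.Esymm v u hf.1)
  · exact I.bipartite u v (I.Esymm v u hs.1)

theorem fsGraph_adj_of_mem_A {a x : V} (ha : a ∈ I.A) (h : (fsGraph I).Adj a x) :
    firstChoice I a x ∨ sPost I a x := by
  rcases h.2 with ⟨-, h⟩ | ⟨hx, -⟩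
  · exact h
  · exact absurd hx ((fsGraph_adj_mem_A_iff h).mp ha)

theorem popular_matches_along_cycle_of_mem_A {c : ℚ} (hc : 3 < c)
    (hA : ∀ a ∈ I.A, I.w a = c) (hB : ∀ b : V, b ∉ I.A → I.w b = 1) {M : Matching V I.E}
    (hM : popular I M) {u₀ : V} {p : (fsGraph I).Walk u₀ u₀} (hp : p.IsCycle) {a : V}
    (hap : a ∈ p.support) (ha : a ∈ I.A) : ∃ z, M.m a = some z ∧ s(a, z) ∈ p.edges := by
  obtain ⟨x, y, hxy, hx, hy⟩ := hp.exists_ne_mem_edges hap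
  have hfs := fun z (hz : s(a, z) ∈ p.edges) => fsGraph_adj_of_mem_A ha (p.adj_of_mem_edges hz)
  have hmatched := fun {bf bs} => popular_matches_firstChoice_or_sPost (bf := bf) (bs := bs)
    hc hA hB hM ha
  rcases hfs x hx, hfs y hy with ⟨hfx | hsx, hfy | hsy⟩
  · exact absurd (I.firstChoice_unique hfx hfy) hxy
  · exact (hmatched hfx hsy).elim (fun h => ⟨x, h, hx⟩) (fun h => ⟨y, h, hy⟩)
  · exact (hmatched hfy hsx).elim (fun h => ⟨y, h, hy⟩) (fun h => ⟨x, h, hx⟩)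
  · exact absurd (I.sPost_unique hsx hsy) hxy

end fsGraph

/-- With `w(a) = c > 3` on `A` and `w(b) = 1` on `B`: on every cycle of the
`f/s`-edge graph, every popular matching matches each cycle vertex along a
cycle edge. -/
theorem cycle_matched_along_cycle (I : PMInstance V) (c : ℚ) (hc : 3 < c)
    (hA : ∀ a ∈ I.A, I.w a = c) (hB : ∀ b : V, b ∉ I.A → I.w b = 1)
    (u₀ : V) (p : (fsGraph I).Walk u₀ u₀) (hp : p.IsCycle)
    (M : Matching V I.E) (hM : popular I M) :
    ∀ v ∈ p.support, ∃ z ∈ p.support, M.m v = some z ∧ s(v, z) ∈ p.edges :=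
  M.matched_along_cycle_of_matched_on_side (· ∈ I.A) (fun _ _ => fsGraph_adj_mem_A_iff) hp
    fun _ hap ha => popular_matches_along_cycle_of_mem_A hc hA hB hM hp hap ha
end
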